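/- arXiv:0804.4505 — 3 statements merged into one kernel-verified Lean document; each statement's English description precedes it below -/
import Mathlib

section
/- Let d ≥ 2. There exists a constant C = C(d) > 0, independent of q, such that for every finite field F_q of odd characteristic, every non-degenerate quadratic form Q on F_q^d, every j ∈ F_q \ {0}, and every subset E ⊆ S_j with #E ≥ q^{(d+1)/2}, one has ‖(χ_E dσ)^∨‖_{L^4(F_q^d, dm)} ≤ C · (#E / #S_j)^{3/4}, where χ_E is the characteristic function of E (note (#E / #S_j)^{3/4} = ‖χ_E‖_{L^{4/3}(S_j, dσ)}). -/
/-!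
Let `Â(m) = ∑_{x ∈ E} χ(-x·m)` (`fourierSum`), so `(χ_E dσ)^∨ = Â / #S_j`. Orthogonality of
characters gives `∑_m |Â(m)|⁴ = q^d Λ`, where `Λ` counts solutions of `x + y = z + w` in `E`.
Letting `w` range over all of `S_j` only increases `Λ`, and expanding the larger count in
Fourier gives `q^d Λ ≤ #E³ #S_j + max_{m ≠ 0} |Ŝ_j(m)| ∑_m |Â(m)|³`. Writing the indicator of
`S_j` as the average of `χ(t (Q - j))` over `t`, each `Ŝ_j(m)` is an average of `d`-dimensional
quadratic Gauss sums, which have modulus `q^{d/2}` for `t ≠ 0`. Cauchy–Schwarz and Plancherel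
then give `∑ |Â|⁴ ≤ 2 #E³ #S_j + q^{2d} #E`, and the last term is `≲ #E³ #S_j` because
`#E² ≥ q^{d+1}` and `#S_j ≳ q^{d-1}` (the same Gauss sum bound at `m = 0`).
-/

open Finset

/-- The non-degenerate quadratic surface `S_j = {x ∈ F^d : Q(x) = j}`,
where `Q(x) = ∑_{i,k} a i k * x i * x k`. -/
def Surf {F : Type} [Field F] [Fintype F] [DecidableEq F] {d : ℕ}
    (a : Matrix (Fin d) (Fin d) F) (j : F) : Finset (Fin d → F) :=
  Finset.univ.filter fun x => (∑ i, ∑ k, a i k * x i * x k) = j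

/-- The extension (inverse Fourier) transform `(f dσ)^∨(m) = (1/#S_j) ∑_{x ∈ S_j} χ(-x·m) f(x)`. -/
noncomputable def extFT {F : Type} [Field F] [Fintype F] [DecidableEq F] {d : ℕ}
    (a : Matrix (Fin d) (Fin d) F) (j : F) (χ : F → ℂ) (f : (Fin d → F) → ℂ)
    (m : Fin d → F) : ℂ :=
  ((Surf a j).card : ℂ)⁻¹ * ∑ x ∈ Surf a j, χ (-(∑ i, x i * m i)) * f x

/-- `L^r` norm with counting measure on the frequency space `F^d`. -/
noncomputable def LrNorm {F : Type} [Fintype F] {d : ℕ}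
    (r : ℝ) (g : (Fin d → F) → ℂ) : ℝ :=
  (∑ m : Fin d → F, ‖g m‖ ^ r) ^ (1 / r)

/-- `L^p` norm with normalized surface measure `dσ` on `S_j`. -/
noncomputable def LpNormS {F : Type} [Field F] [Fintype F] [DecidableEq F] {d : ℕ}
    (a : Matrix (Fin d) (Fin d) F) (j : F) (p : ℝ) (f : (Fin d → F) → ℂ) : ℝ :=
  (((Surf a j).card : ℝ)⁻¹ * ∑ x ∈ Surf a j, ‖f x‖ ^ p) ^ (1 / p)

open Matrix ComplexConjugate

def addQuadruples {G : Type*} [AddCommGroup G] [DecidableEq G] (E W : Finset G) :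
    Finset (G × G × G × G) :=
  {s ∈ E ×ˢ E ×ˢ E ×ˢ W | s.1 + s.2.1 = s.2.2.1 + s.2.2.2}

theorem addQuadruples_subset_addQuadruples {G : Type*} [AddCommGroup G] [DecidableEq G]
    (E : Finset G) {W W' : Finset G} (h : W ⊆ W') : addQuadruples E W ⊆ addQuadruples E W' :=
  filter_subset_filter _ <| product_subset_product subset_rfl <|
    product_subset_product subset_rfl <| product_subset_product subset_rfl h

section Fourier

variable {F : Type} [Field F] {d : ℕ} {ψ : AddChar F ℂ}

variable (ψ) in
def fourierSum (E : Finset (Fin d → F)) (m : Fin d → F) : ℂ := ∑ x ∈ E, ψ (-(x ⬝ᵥ m))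

theorem fourierSum_eq (E : Finset (Fin d → F)) (m : Fin d → F) :
    fourierSum ψ E m = ∑ x ∈ E, ψ (-x ⬝ᵥ m) := by
  simp [fourierSum, neg_dotProduct]

@[simp] theorem fourierSum_zero (E : Finset (Fin d → F)) : fourierSum ψ E 0 = #E := by
  simp [fourierSum]

theorem sum_addChar_dotProduct_mul_sum {ι κ : Type*} (s : Finset ι) (t : Finset κ)
    (u : ι → Fin d → F) (v : κ → Fin d → F) (m : Fin d → F) :
    (∑ x ∈ s, ψ (u x ⬝ᵥ m)) * ∑ y ∈ t, ψ (v y ⬝ᵥ m) =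
      ∑ p ∈ s ×ˢ t, ψ ((u p.1 + v p.2) ⬝ᵥ m) := by
  simp [sum_mul_sum, sum_product, add_dotProduct, AddChar.map_add_eq_mul]

variable [Fintype F]

theorem conj_fourierSum (E : Finset (Fin d → F)) (m : Fin d → F) :
    conj (fourierSum ψ E m) = ∑ x ∈ E, ψ (x ⬝ᵥ m) := by
  simp [fourierSum, ← AddChar.map_neg_eq_conj]

variable [DecidableEq F]

theorem sum_addChar_dotProduct (hψ : ψ ≠ 0) (v : Fin d → F) :
    ∑ m, ψ (v ⬝ᵥ m) = if v = 0 then (Fintype.card F : ℂ) ^ d else 0 := by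
  let Φ : AddChar (Fin d → F) ℂ :=
    ψ.compAddMonoidHom (AddMonoidHom.mk' (v ⬝ᵥ ·) (dotProduct_add v))
  have hΦ : Φ = 0 ↔ v = 0 := by
    refine ⟨fun h => ?_, fun h => AddChar.ext _ _ fun m => by simp [Φ, h]⟩
    by_contra hv
    obtain ⟨i, hi⟩ := Function.ne_iff.mp hv
    obtain ⟨x, hx⟩ := AddChar.ne_zero_iff.mp hψ
    refine hx ?_
    simpa [Φ, dotProduct_single, mul_inv_cancel_left₀ hi] using
      DFunLike.congr_fun h (Pi.single i ((v i)⁻¹ * x))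
  simpa [Φ, hΦ, Fintype.card_fun] using AddChar.sum_eq_ite Φ

theorem sum_sum_addChar_dotProduct (hψ : ψ ≠ 0) {ι : Type*} (P : Finset ι)
    (v : ι → Fin d → F) :
    ∑ m, ∑ p ∈ P, ψ (v p ⬝ᵥ m) = (Fintype.card F : ℂ) ^ d * #{p ∈ P | v p = 0} := by
  rw [sum_comm]
  simp [sum_addChar_dotProduct hψ, sum_ite, mul_comm]

theorem sum_norm_fourierSum_sq (hψ : ψ ≠ 0) (E : Finset (Fin d → F)) :
    ∑ m, ‖fourierSum ψ E m‖ ^ 2 = (Fintype.card F : ℝ) ^ d * #E := by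
  have h : ∀ m, ((‖fourierSum ψ E m‖ ^ 2 : ℝ) : ℂ) =
      ∑ p ∈ E ×ˢ E, ψ ((p.1 + -p.2) ⬝ᵥ m) := fun m => by
    rw [Complex.ofReal_pow, ← Complex.mul_conj', mul_comm, conj_fourierSum, fourierSum_eq,
      sum_addChar_dotProduct_mul_sum]
  have hdiag : #{p ∈ E ×ˢ E | p.1 + -p.2 = 0} = #E := by
    convert diag_card E using 2
    ext p
    simp only [← sub_eq_add_neg, sub_eq_zero, mem_filter, mem_product,
      mem_diag]
    aesop
  have hC : ((∑ m, ‖fourierSum ψ E m‖ ^ 2 : ℝ) : ℂ) =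
      (((Fintype.card F : ℝ) ^ d * #E : ℝ) : ℂ) := by
    rw [Complex.ofReal_sum]
    simp_rw [h]
    rw [sum_sum_addChar_dotProduct hψ, hdiag]
    push_cast
    rfl
  exact_mod_cast hC

theorem sum_conj_mul_fourierSum (hψ : ψ ≠ 0) (E W : Finset (Fin d → F)) :
    ∑ m, conj (fourierSum ψ E m) * (conj (fourierSum ψ E m) *
        (fourierSum ψ E m * fourierSum ψ W m)) =
      (Fintype.card F : ℂ) ^ d * #(addQuadruples E W) := by
  simp_rw [conj_fourierSum, fourierSum_eq, sum_addChar_dotProduct_mul_sum]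
  rw [sum_sum_addChar_dotProduct hψ, addQuadruples]
  congr 3
  ext s
  simp only [← sub_eq_add_neg, add_sub, sub_sub, sub_eq_zero]

theorem sum_norm_fourierSum_pow_four (hψ : ψ ≠ 0) (E : Finset (Fin d → F)) :
    ∑ m, ‖fourierSum ψ E m‖ ^ 4 = (Fintype.card F : ℝ) ^ d * #(addQuadruples E E) := by
  have h : ∀ z : ℂ, ((‖z‖ ^ 4 : ℝ) : ℂ) = conj z * (conj z * (z * z)) := fun z => by
    rw [show conj z * (conj z * (z * z)) = (z * conj z) ^ 2 by ring, Complex.mul_conj']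
    push_cast
    ring
  have hC : ((∑ m, ‖fourierSum ψ E m‖ ^ 4 : ℝ) : ℂ) =
      (((Fintype.card F : ℝ) ^ d * #(addQuadruples E E) : ℝ) : ℂ) := by
    rw [Complex.ofReal_sum]
    simp_rw [h]
    rw [sum_conj_mul_fourierSum hψ]
    push_cast
    rfl
  exact_mod_cast hC

theorem card_mul_card_addQuadruples_le (hψ : ψ ≠ 0) (E W : Finset (Fin d → F)) :
    (Fintype.card F : ℝ) ^ d * #(addQuadruples E W) ≤
      ∑ m, ‖fourierSum ψ E m‖ ^ 3 * ‖fourierSum ψ W m‖ := by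
  have h := congrArg norm (sum_conj_mul_fourierSum hψ E W)
  rw [norm_mul, norm_pow, Complex.norm_natCast, Complex.norm_natCast] at h
  rw [← h]
  refine (norm_sum_le _ _).trans_eq (sum_congr rfl fun m _ => ?_)
  simp only [norm_mul, Complex.norm_conj]
  ring

end Fourier

section Surface

variable {F : Type} [Field F] {d : ℕ}

def quadForm (a : Matrix (Fin d) (Fin d) F) (x : Fin d → F) : F :=
  ∑ i, ∑ k, a i k * x i * x k

theorem quadForm_eq_dotProduct (a : Matrix (Fin d) (Fin d) F) (x : Fin d → F) :
    quadForm a x = x ⬝ᵥ (a *ᵥ x) := by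
  simp [quadForm, dotProduct, mulVec, mul_sum, mul_assoc, mul_left_comm]

theorem quadForm_add {a : Matrix (Fin d) (Fin d) F} (ha : a.IsSymm) (u y : Fin d → F) :
    quadForm a (u + y) = quadForm a u + quadForm a y + 2 * ((a *ᵥ u) ⬝ᵥ y) := by
  have h : u ⬝ᵥ (a *ᵥ y) = (a *ᵥ u) ⬝ᵥ y := by
    rw [dotProduct_mulVec, ← mulVec_transpose, ha.eq]
  simp only [quadForm_eq_dotProduct, mulVec_add, add_dotProduct, dotProduct_add, h,
    dotProduct_comm y (a *ᵥ u)]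
  ring

variable [Fintype F] [DecidableEq F] {ψ : AddChar F ℂ}

variable (ψ) in
def quadGaussSum (a : Matrix (Fin d) (Fin d) F) (j t : F) (m : Fin d → F) : ℂ :=
  ∑ x, ψ (t * (quadForm a x - j) - x ⬝ᵥ m)

theorem card_mul_fourierSum_Surf (hψ : ψ ≠ 0) (a : Matrix (Fin d) (Fin d) F) (j : F)
    (m : Fin d → F) :
    (Fintype.card F : ℂ) * fourierSum ψ (Surf a j) m = ∑ t, quadGaussSum ψ a j t m := by
  simp_rw [quadGaussSum, sub_eq_add_neg (_ * _), AddChar.map_add_eq_mul]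
  rw [sum_comm]
  simp_rw [← sum_mul, AddChar.sum_mulShift _ (AddChar.IsPrimitive.of_ne_one hψ),
    sub_eq_zero]
  rw [fourierSum, mul_sum, Surf, sum_filter]
  refine sum_congr rfl fun x _ => ?_
  rw [Nat.cast_ite, Nat.cast_zero, ite_mul, zero_mul]
  rfl

theorem quadGaussSum_zero (hψ : ψ ≠ 0) (a : Matrix (Fin d) (Fin d) F) (j : F)
    (m : Fin d → F) :
    quadGaussSum ψ a j 0 m = if m = 0 then (Fintype.card F : ℂ) ^ d else 0 := by
  have h : ∀ x : Fin d → F, -(x ⬝ᵥ m) = -m ⬝ᵥ x := fun x => by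
    rw [dotProduct_comm, neg_dotProduct]
  simp only [quadGaussSum, zero_mul, zero_sub, h, sum_addChar_dotProduct hψ, neg_eq_zero]

theorem quadGaussSum_mul_conj (hψ : ψ ≠ 0) (h2 : (2 : F) ≠ 0)
    {a : Matrix (Fin d) (Fin d) F} (ha : a.IsSymm) (hdet : a.det ≠ 0) (j : F) {t : F}
    (ht : t ≠ 0) (m : Fin d → F) :
    quadGaussSum ψ a j t m * conj (quadGaussSum ψ a j t m) = (Fintype.card F : ℂ) ^ d := by
  set φ : (Fin d → F) → F := fun x => t * (quadForm a x - j) - x ⬝ᵥ m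
  -- after substituting `x = u + y`, the phase difference is linear in `y`, so the sum over `y`
  -- kills every `u` except `u = 0`
  have hφ : ∀ u y,
      φ (u + y) - φ y = (t * quadForm a u - u ⬝ᵥ m) + ((2 * t) • (a *ᵥ u)) ⬝ᵥ y := fun u y => by
    simp only [φ, quadForm_add ha, add_dotProduct, smul_dotProduct, smul_eq_mul]
    ring
  have hu : ∀ u : Fin d → F, (2 * t) • (a *ᵥ u) = 0 ↔ u = 0 := fun u => by
    refine ⟨fun h => ?_, fun h => by simp [h]⟩
    by_contra hu
    exact hdet (exists_mulVec_eq_zero_iff.mp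
      ⟨u, hu, (smul_eq_zero.mp h).resolve_left (mul_ne_zero h2 ht)⟩)
  calc quadGaussSum ψ a j t m * conj (quadGaussSum ψ a j t m)
      = ∑ y, ∑ x, ψ (φ x - φ y) := by
        rw [quadGaussSum, map_sum, sum_mul_sum, sum_comm]
        refine sum_congr rfl fun y _ => sum_congr rfl fun x _ => ?_
        rw [sub_eq_add_neg (φ x), AddChar.map_add_eq_mul, AddChar.map_neg_eq_conj]
    _ = ∑ y, ∑ u, ψ (φ (u + y) - φ y) :=
        sum_congr rfl fun y _ =>
          (Fintype.sum_equiv (Equiv.addRight y) _ _ fun _ => rfl).symm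
    _ = ∑ u, ψ (t * quadForm a u - u ⬝ᵥ m) * ∑ y, ψ (((2 * t) • (a *ᵥ u)) ⬝ᵥ y) := by
        rw [sum_comm]
        simp_rw [hφ, AddChar.map_add_eq_mul, mul_sum]
    _ = (Fintype.card F : ℂ) ^ d := by
        simp only [sum_addChar_dotProduct hψ, hu, mul_ite, mul_zero, sum_ite_eq',
          mem_univ, if_true]
        simp [quadForm]

theorem norm_quadGaussSum (hψ : ψ ≠ 0) (h2 : (2 : F) ≠ 0)
    {a : Matrix (Fin d) (Fin d) F} (ha : a.IsSymm) (hdet : a.det ≠ 0) (j : F) {t : F}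
    (ht : t ≠ 0) (m : Fin d → F) :
    ‖quadGaussSum ψ a j t m‖ = √((Fintype.card F : ℝ) ^ d) := by
  have h := quadGaussSum_mul_conj hψ h2 ha hdet j ht m
  rw [Complex.mul_conj'] at h
  rw [← Real.sqrt_sq (norm_nonneg _)]
  exact_mod_cast congrArg Real.sqrt (by exact_mod_cast h)

theorem norm_card_mul_fourierSum_Surf_sub_le (hψ : ψ ≠ 0) (h2 : (2 : F) ≠ 0)
    {a : Matrix (Fin d) (Fin d) F} (ha : a.IsSymm) (hdet : a.det ≠ 0) (j : F)
    (m : Fin d → F) :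
    ‖(Fintype.card F : ℂ) * fourierSum ψ (Surf a j) m -
        (if m = 0 then (Fintype.card F : ℂ) ^ d else 0)‖ ≤
      Fintype.card F * √((Fintype.card F : ℝ) ^ d) := by
  rw [card_mul_fourierSum_Surf hψ, ← quadGaussSum_zero hψ a j,
    ← sum_erase_add _ _ (mem_univ 0), add_sub_cancel_right]
  calc ‖∑ t ∈ univ.erase 0, quadGaussSum ψ a j t m‖
      ≤ ∑ t ∈ univ.erase (0 : F), √((Fintype.card F : ℝ) ^ d) :=
        norm_sum_le_of_le _ fun t ht =>
          (norm_quadGaussSum hψ h2 ha hdet j (ne_of_mem_erase ht) m).le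
    _ ≤ Fintype.card F * √((Fintype.card F : ℝ) ^ d) := by
        rw [sum_const, nsmul_eq_mul]
        gcongr
        exact_mod_cast card_erase_le

theorem norm_fourierSum_Surf_le (hψ : ψ ≠ 0) (h2 : (2 : F) ≠ 0)
    {a : Matrix (Fin d) (Fin d) F} (ha : a.IsSymm) (hdet : a.det ≠ 0) (j : F)
    {m : Fin d → F} (hm : m ≠ 0) :
    ‖fourierSum ψ (Surf a j) m‖ ≤ √((Fintype.card F : ℝ) ^ d) := by
  have h := norm_card_mul_fourierSum_Surf_sub_le hψ h2 ha hdet j m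
  rw [if_neg hm, sub_zero, norm_mul, Complex.norm_natCast] at h
  exact le_of_mul_le_mul_left h (by positivity)

theorem pow_le_card_mul_card_Surf_add (hψ : ψ ≠ 0) (h2 : (2 : F) ≠ 0)
    {a : Matrix (Fin d) (Fin d) F} (ha : a.IsSymm) (hdet : a.det ≠ 0) (j : F) :
    (Fintype.card F : ℝ) ^ d ≤
      Fintype.card F * #(Surf a j) + Fintype.card F * √((Fintype.card F : ℝ) ^ d) := by
  have h := norm_card_mul_fourierSum_Surf_sub_le hψ h2 ha hdet j 0
  have h' := norm_sub_norm_le ((Fintype.card F : ℂ) ^ d)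
    ((Fintype.card F : ℂ) * #(Surf a j))
  rw [if_pos rfl, fourierSum_zero, norm_sub_rev] at h
  simp only [norm_pow, norm_mul, Complex.norm_natCast] at h h'
  linarith

end Surface

theorem le_two_mul_add_of_sq_le_mul {T α b X : ℝ} (hT : 0 ≤ T) (hb : 0 ≤ b)
    (hTX : T ≤ α + X) (hX2 : X ^ 2 ≤ b * T) : T ≤ 2 * α + b := by
  nlinarith [sq_nonneg (b - T), sq_nonneg (2 * X - b - T)]

theorem pow_sub_one_le_two_mul {q N : ℝ} {d : ℕ} (hq : 3 ≤ q) (hd : 2 ≤ d)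
    (hN : q ^ d ≤ q * N + q * √(q ^ d)) (hlarge : q ^ (((d : ℝ) + 1) / 2) ≤ N) :
    q ^ (d - 1) ≤ 2 * N := by
  -- for `d ≤ 3` the size hypothesis alone gives `q ^ (d - 1) ≤ N`; for `d ≥ 4` the point
  -- count `q ^ d ≤ q * N + q * √(q ^ d)` does, since then `√(q ^ d) ≤ q ^ (d - 2)`
  have hN0 : 0 ≤ N := (Real.rpow_nonneg (by linarith) _).trans hlarge
  rcases le_or_gt d 3 with hd3 | hd3
  · calc q ^ (d - 1) = q ^ ((d - 1 : ℕ) : ℝ) := (Real.rpow_natCast _ _).symm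
      _ ≤ q ^ (((d : ℝ) + 1) / 2) := by
        refine Real.rpow_le_rpow_of_exponent_le (by linarith) ?_
        rw [Nat.cast_sub (by omega)]
        have : (d : ℝ) ≤ 3 := by exact_mod_cast hd3
        linarith
      _ ≤ 2 * N := by linarith
  · have hsqrt : √(q ^ d) ≤ q ^ (d - 2) := Real.sqrt_le_iff.mpr
      ⟨by positivity, by rw [← pow_mul]; exact pow_le_pow_right₀ (by linarith) (by omega)⟩
    have hd1 : q ^ d = q * q ^ (d - 1) := by rw [← pow_succ']; congr 1; omega
    have hd2 : q ^ (d - 1) = q * q ^ (d - 2) := by rw [← pow_succ']; congr 1; omega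
    have hq0 : 0 ≤ q ^ (d - 2) := by positivity
    have h : q ^ (d - 1) ≤ N + √(q ^ d) :=
      le_of_mul_le_mul_left (by linarith) (by linarith : (0 : ℝ) < q)
    nlinarith

theorem LrNorm_four_le {F : Type} [Fintype F] {d : ℕ} {g : (Fin d → F) → ℂ} {y : ℝ}
    (hy : 0 ≤ y) (h : ∑ m, ‖g m‖ ^ 4 ≤ 16 * y ^ 3) : LrNorm 4 g ≤ 2 * y ^ (3 / 4 : ℝ) := by
  have h16 : 16 * y ^ 3 = (2 * y ^ (3 / 4 : ℝ)) ^ 4 := by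
    rw [mul_pow, ← Real.rpow_natCast (y ^ _), ← Real.rpow_mul hy]
    norm_num
  rw [LrNorm]
  simp_rw [Real.rpow_ofNat]
  calc (∑ m, ‖g m‖ ^ 4) ^ (1 / 4 : ℝ) ≤ ((2 * y ^ (3 / 4 : ℝ)) ^ 4) ^ (1 / 4 : ℝ) := by
        rw [← h16]
        gcongr
    _ = 2 * y ^ (3 / 4 : ℝ) := by
        rw [one_div, show (4 : ℝ) = ((4 : ℕ) : ℝ) by norm_num,
          Real.pow_rpow_inv_natCast (by positivity) (by norm_num)]

section FourthMoment

variable {F : Type} [Field F] [Fintype F] [DecidableEq F] {d : ℕ} {ψ : AddChar F ℂ}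

theorem sum_norm_fourierSum_pow_four_le (hψ : ψ ≠ 0) (h2 : (2 : F) ≠ 0)
    {a : Matrix (Fin d) (Fin d) F} (ha : a.IsSymm) (hdet : a.det ≠ 0) {j : F}
    {E : Finset (Fin d → F)} (hE : E ⊆ Surf a j) :
    ∑ m, ‖fourierSum ψ E m‖ ^ 4 ≤
      2 * ((#E : ℝ) ^ 3 * #(Surf a j)) + (Fintype.card F : ℝ) ^ (2 * d) * #E := by
  set q : ℝ := (Fintype.card F : ℝ)
  set T := ∑ m, ‖fourierSum ψ E m‖ ^ 4
  set X := ∑ m, ‖fourierSum ψ E m‖ ^ 3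
  have hpoint : ∀ m, ‖fourierSum ψ E m‖ ^ 3 * ‖fourierSum ψ (Surf a j) m‖ ≤
      (if m = 0 then (#E : ℝ) ^ 3 * #(Surf a j) else 0) +
        √(q ^ d) * ‖fourierSum ψ E m‖ ^ 3 := by
    intro m
    split_ifs with hm
    · subst hm
      simp only [fourierSum_zero, Complex.norm_natCast, le_add_iff_nonneg_right]
      positivity
    · rw [zero_add, mul_comm]
      gcongr
      exact norm_fourierSum_Surf_le hψ h2 ha hdet j hm
  have hTX : T ≤ (#E : ℝ) ^ 3 * #(Surf a j) + √(q ^ d) * X := calc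
    T = q ^ d * #(addQuadruples E E) := sum_norm_fourierSum_pow_four hψ E
    _ ≤ q ^ d * #(addQuadruples E (Surf a j)) := by
      gcongr
      exact addQuadruples_subset_addQuadruples E hE
    _ ≤ ∑ m, ‖fourierSum ψ E m‖ ^ 3 * ‖fourierSum ψ (Surf a j) m‖ :=
      card_mul_card_addQuadruples_le hψ E _
    _ ≤ _ := (sum_le_sum fun m _ => hpoint m).trans_eq <| by
      rw [sum_add_distrib, sum_ite_eq' univ (0 : Fin d → F), ← mul_sum,
        if_pos (mem_univ _)]
  have hX : X ^ 2 ≤ q ^ d * #E * T := calc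
    X ^ 2 = (∑ m, ‖fourierSum ψ E m‖ * ‖fourierSum ψ E m‖ ^ 2) ^ 2 :=
      congrArg (· ^ 2) (sum_congr rfl fun m _ => by ring)
    _ ≤ (∑ m, ‖fourierSum ψ E m‖ ^ 2) * ∑ m, (‖fourierSum ψ E m‖ ^ 2) ^ 2 :=
      sum_mul_sq_le_sq_mul_sq _ _ _
    _ = q ^ d * #E * T := by
      rw [sum_norm_fourierSum_sq hψ]
      exact congrArg _ (sum_congr rfl fun m _ => by ring)
  refine le_two_mul_add_of_sq_le_mul (by positivity) (by positivity) hTX ?_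
  calc (√(q ^ d) * X) ^ 2 = q ^ d * X ^ 2 := by rw [mul_pow, Real.sq_sqrt (by positivity)]
    _ ≤ q ^ d * (q ^ d * #E * T) := by gcongr
    _ = q ^ (2 * d) * #E * T := by ring

theorem sum_norm_fourierSum_pow_four_le_of_large (hψ : ψ ≠ 0) (h2 : (2 : F) ≠ 0)
    (hq : 3 ≤ Fintype.card F) (hd : 2 ≤ d) {a : Matrix (Fin d) (Fin d) F} (ha : a.IsSymm)
    (hdet : a.det ≠ 0) {j : F} {E : Finset (Fin d → F)} (hE : E ⊆ Surf a j)
    (hlarge : (Fintype.card F : ℝ) ^ (((d : ℝ) + 1) / 2) ≤ #E) :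
    ∑ m, ‖fourierSum ψ E m‖ ^ 4 ≤ 4 * ((#E : ℝ) ^ 3 * #(Surf a j)) := by
  have hq3 : (3 : ℝ) ≤ Fintype.card F := by exact_mod_cast hq
  set q : ℝ := (Fintype.card F : ℝ)
  have hq0 : 0 ≤ q := by positivity
  have hSurf : q ^ (d - 1) ≤ 2 * #(Surf a j) :=
    pow_sub_one_le_two_mul hq3 hd (pow_le_card_mul_card_Surf_add hψ h2 ha hdet j)
      (hlarge.trans (by exact_mod_cast card_le_card hE))
  have hE2 : q ^ (d + 1) ≤ (#E : ℝ) ^ 2 := calc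
    q ^ (d + 1) = (q ^ (((d : ℝ) + 1) / 2)) ^ 2 := by
      rw [← Real.rpow_natCast _ 2, ← Real.rpow_mul hq0, ← Real.rpow_natCast]
      push_cast
      ring_nf
    _ ≤ (#E : ℝ) ^ 2 := by gcongr
  have hq2d : q ^ (2 * d) = q ^ (d - 1) * q ^ (d + 1) := by rw [← pow_add]; congr 1; omega
  have hmain := sum_norm_fourierSum_pow_four_le (ψ := ψ) hψ h2 ha hdet hE
  rw [hq2d] at hmain
  have hE0 : (0 : ℝ) ≤ #E := by positivity
  nlinarith [mul_le_mul hSurf hE2 (by positivity) (by positivity)]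

theorem extFT_indicator_eq {a : Matrix (Fin d) (Fin d) F} {j : F} {E : Finset (Fin d → F)}
    (hE : E ⊆ Surf a j) (m : Fin d → F) :
    extFT a j ψ (fun x => if x ∈ E then 1 else 0) m =
      (#(Surf a j) : ℂ)⁻¹ * fourierSum ψ E m := by
  rw [extFT, fourierSum]
  congr 1
  simp_rw [mul_ite, mul_one, mul_zero]
  rw [← sum_filter, filter_mem_eq_inter, inter_eq_right.mpr hE]
  rfl

end FourthMoment

/-- Theorem: restricted extension estimate for big sets `E ⊆ S_j` with
`#E ≥ q^{(d+1)/2}`: `‖(χ_E dσ)^∨‖_{L^4} ≲ (#E/#S_j)^{3/4}`. -/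
theorem stmt3 (d : ℕ) (hd : 2 ≤ d) :
    ∃ C : ℝ, 0 < C ∧
      ∀ (F : Type) [Field F] [Fintype F] [DecidableEq F],
        Odd (ringChar F) →
        ∀ χ : F → ℂ, χ 0 = 1 → (∀ x y : F, χ (x + y) = χ x * χ y) → (∃ x : F, χ x ≠ 1) →
        ∀ a : Matrix (Fin d) (Fin d) F, (∀ i k, a i k = a k i) → a.det ≠ 0 →
        ∀ j : F, j ≠ 0 →
        ∀ E : Finset (Fin d → F), E ⊆ Surf a j →
          (Fintype.card F : ℝ) ^ (((d : ℝ) + 1) / 2) ≤ (E.card : ℝ) →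
          LrNorm 4 (extFT a j χ (fun x => if x ∈ E then 1 else 0))
            ≤ C * ((E.card : ℝ) / ((Surf a j).card : ℝ)) ^ ((3 : ℝ) / 4) := by
  refine ⟨2, two_pos, fun F _ _ _ hodd χ hχ0 hχadd hχnt a hsym hdet j _ E hE hlarge => ?_⟩
  let ψ : AddChar F ℂ := ⟨χ, hχ0, hχadd⟩
  have hψ : ψ ≠ 0 := AddChar.ne_zero_iff.mpr hχnt
  have hchar : ringChar F ≠ 2 := fun h => Nat.not_odd_iff_even.mpr even_two (h ▸ hodd)
  have hq : 3 ≤ Fintype.card F := by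
    have := FiniteField.odd_card_of_char_ne_two hchar
    have := Fintype.one_lt_card (α := F)
    omega
  have hE0 : (0 : ℝ) < #E := (Real.rpow_pos_of_pos (by positivity) _).trans_le hlarge
  have hN0 : (0 : ℝ) < #(Surf a j) := hE0.trans_le (by exact_mod_cast card_le_card hE)
  have hT := sum_norm_fourierSum_pow_four_le_of_large hψ (Ring.two_ne_zero hchar) hq hd
    (IsSymm.ext fun i k => hsym k i) hdet hE hlarge
  have hext : ∀ m, extFT a j χ (fun x => if x ∈ E then 1 else 0) m =
      (#(Surf a j) : ℂ)⁻¹ * fourierSum ψ E m := extFT_indicator_eq (ψ := ψ) hE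
  refine LrNorm_four_le (by positivity) ?_
  simp_rw [hext, norm_mul, mul_pow, ← mul_sum, norm_inv, Complex.norm_natCast]
  calc ((#(Surf a j) : ℝ)⁻¹) ^ 4 * ∑ m, ‖fourierSum ψ E m‖ ^ 4
      ≤ ((#(Surf a j) : ℝ)⁻¹) ^ 4 * (4 * ((#E : ℝ) ^ 3 * #(Surf a j))) := by gcongr
    _ ≤ 16 * (#E / #(Surf a j) : ℝ) ^ 3 := by
      field_simp
      nlinarith [pow_pos hE0 3, pow_pos hN0 3]
end

section
/- (Salié sum bound) There exists an absolute constant C > 0 such that for every finite field F_q with q odd, every nontrivial additive character χ of F_q, the multiplicative character ψ of F_q^* of order two (the quadratic character), and all a, b ∈ F_q, one has |Σ_{t ∈ F_q^*} ψ(t) χ(a t + b t^{−1})| ≤ C q^{1/2}. -/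
/-!
Multiplying the Salié sum by the quadratic Gauss sum `G`, for which `‖G‖ = √q`, evaluates it.
Completing the square gives `ψ(t) G χ(-t⁻¹) = ∑ y, χ(t y² + 2 y)`, so by orthogonality of `χ`
`G · S(c, -1) = q ∑_{y² = -c} χ(2 y)`, a sum of at most two roots of unity. The general
`S(a, b)` reduces to this case through `S(a, b) = ψ(λ) S(aλ, b/λ)` and `S(a, b) = S(b, a)`.
-/

open Finset AddChar MulChar

section SalieSum

variable {F R : Type*} [Field F] [Fintype F] [CommRing R]

/-- Summing over all of `F` is harmless, since `ψ 0 = 0`. -/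
def salieSum (ψ : MulChar F R) (χ : AddChar F R) (a b : F) : R :=
  ∑ t, ψ t * χ (a * t + b * t⁻¹)

lemma salieSum_eq_mul_salieSum (ψ : MulChar F R) (χ : AddChar F R) (a b : F) {c : F}
    (hc : c ≠ 0) : salieSum ψ χ a b = ψ c * salieSum ψ χ (a * c) (b * c⁻¹) := by
  rw [salieSum, salieSum, mul_sum]
  refine (Fintype.sum_bijective (c * ·) (mulLeft_bijective₀ c hc) _ _ fun s ↦ ?_).symm
  rw [map_mul, mul_inv, mul_assoc]
  ring_nf

lemma salieSum_comm (ψ : MulChar F R) (χ : AddChar F R) (a b : F) :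
    salieSum ψ χ a b = salieSum ψ⁻¹ χ b a := by
  refine (Fintype.sum_bijective (·⁻¹) inv_involutive.bijective _ _ fun t ↦ ?_).symm
  rw [MulChar.inv_apply', inv_inv, add_comm]

lemma salieSum_zero_zero [IsDomain R] {ψ : MulChar F R} (hψ : ψ ≠ 1) (χ : AddChar F R) :
    salieSum ψ χ 0 0 = 0 := by
  simpa [salieSum] using sum_eq_zero_of_ne_one hψ

lemma card_filter_sq_eq_le_two [DecidableEq F] (w : F) : #{y | y ^ 2 = w} ≤ 2 :=
  calc #{y | y ^ 2 = w} ≤ #(Polynomial.nthRootsFinset 2 w) :=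
        card_le_card fun y hy ↦ (Polynomial.mem_nthRootsFinset two_pos w).2 (mem_filter.1 hy).2
    _ ≤ Multiset.card (Polynomial.nthRoots 2 w) := by
        rw [Polynomial.nthRootsFinset_def]
        exact Multiset.toFinset_card_le _
    _ ≤ 2 := Polynomial.card_nthRoots 2 w

variable [DecidableEq F]

lemma quadraticChar_eq_ite {t : F} (ht : t ≠ 0) :
    quadraticChar F t = if ∃ s, s * s = t then 1 else -1 := by
  simp only [quadraticChar_apply, quadraticCharFun, if_neg ht, IsSquare, eq_comm]

lemma norm_quadraticChar_apply {t : F} (ht : t ≠ 0) : ‖(quadraticChar F t : ℂ)‖ = 1 := by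
  rcases quadraticChar_dichotomy ht with h | h <;> simp [h]

variable [IsDomain R] {χ : AddChar F R}

local notation "η" => MulChar.ringHomComp (quadraticChar F) (Int.castRingHom R)

lemma sum_addChar_mul_sq (hF : ringChar F ≠ 2) (hχ : χ.IsPrimitive) {t : F} (ht : t ≠ 0) :
    ∑ y, χ (t * y ^ 2) = η t * gaussSum η χ := by
  have hcard (w : F) : (#{y | y ^ 2 = w} : R) = η w + 1 := by
    simpa [Set.toFinset_ofPred] using congrArg (Int.cast : ℤ → R) (quadraticChar_card_sqrts hF w)
  calc ∑ y, χ (t * y ^ 2) = ∑ w, ∑ y with y ^ 2 = w, χ (t * y ^ 2) := (sum_fiberwise _ _ _).symm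
    _ = ∑ w, (η w + 1) * χ (w * t) := by
        refine sum_congr rfl fun w _ ↦ ?_
        rw [sum_congr rfl fun y hy ↦ by rw [(mem_filter.1 hy).2, mul_comm], sum_const,
          nsmul_eq_mul, hcard]
    _ = gaussSum η (χ.mulShift t) := by
        simp only [add_mul, one_mul, sum_add_distrib, sum_mulShift t hχ, if_neg ht,
          Nat.cast_zero, add_zero, gaussSum, mulShift_apply, mul_comm t]
    _ = η t * gaussSum η χ := by
        simpa [((quadraticChar_isQuadratic F).comp _).inv] using
          gaussSum_mulShift_eq η χ (Units.mk0 t ht)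

lemma sum_addChar_mul_sq_add_two_mul (hF : ringChar F ≠ 2) (hχ : χ.IsPrimitive) (t : F) :
    ∑ y, χ (t * y ^ 2 + 2 * y) = η t * gaussSum η χ * χ (-t⁻¹) := by
  rcases eq_or_ne t 0 with rfl | ht
  · simpa [mul_comm (2 : F), Ring.two_ne_zero hF] using sum_mulShift 2 hχ
  have complete_square (y : F) : χ (t * y ^ 2 + 2 * y) = χ (t * (y + t⁻¹) ^ 2) * χ (-t⁻¹) := by
    rw [← map_add_eq_mul]
    congr 1
    field_simp
    ring
  rw [sum_congr rfl fun y _ ↦ complete_square y, ← sum_mul, ← sum_addChar_mul_sq hF hχ ht]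
  congr 1
  exact Fintype.sum_equiv (Equiv.addRight t⁻¹) _ _ fun y ↦ rfl

lemma gaussSum_mul_salieSum_neg_one (hF : ringChar F ≠ 2) (hχ : χ.IsPrimitive) (c : F) :
    gaussSum η χ * salieSum η χ c (-1) = Fintype.card F * ∑ y with y ^ 2 = -c, χ (2 * y) :=
  calc gaussSum η χ * salieSum η χ c (-1)
      = ∑ t, χ (c * t) * ∑ y, χ (t * y ^ 2 + 2 * y) := by
        simp only [salieSum, mul_sum, sum_addChar_mul_sq_add_two_mul hF hχ]
        refine sum_congr rfl fun t _ ↦ ?_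
        rw [neg_one_mul, map_add_eq_mul]
        ring
    _ = ∑ y, χ (2 * y) * ∑ t, χ (t * (y ^ 2 + c)) := by
        simp only [mul_sum]
        rw [sum_comm]
        refine sum_congr rfl fun y _ ↦ sum_congr rfl fun t _ ↦ ?_
        rw [← map_add_eq_mul, ← map_add_eq_mul]
        ring_nf
    _ = _ := by
        rw [mul_sum, sum_filter]
        refine sum_congr rfl fun y _ ↦ ?_
        simp only [sum_mulShift _ hχ, add_eq_zero_iff_eq_neg]
        split_ifs <;> simp [mul_comm]

end SalieSum

section Bound

variable {F : Type*} [Field F] [Fintype F] [DecidableEq F] {χ : AddChar F ℂ}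

local notation "η" => MulChar.ringHomComp (quadraticChar F) (Int.castRingHom ℂ)

lemma norm_gaussSum_quadraticChar (hF : ringChar F ≠ 2) (hχ : χ.IsPrimitive) :
    ‖gaussSum η χ‖ = √(Fintype.card F) := by
  have hη : η ≠ 1 := (ringHomComp_ne_one_iff Int.cast_injective).2 (quadraticChar_ne_one hF)
  have hsq := congrArg norm (gaussSum_sq hη ((quadraticChar_isQuadratic F).comp _) hχ)
  rw [norm_pow, norm_mul, ringHomComp_apply, Int.coe_castRingHom,
    norm_quadraticChar_apply (neg_ne_zero.2 one_ne_zero), one_mul, Complex.norm_natCast] at hsq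
  rw [← hsq, Real.sqrt_sq (norm_nonneg _)]

lemma norm_salieSum_neg_one_le (hF : ringChar F ≠ 2) (hχ : χ.IsPrimitive) (c : F) :
    ‖salieSum η χ c (-1)‖ ≤ 2 * √(Fintype.card F) := by
  have hq : 0 < √(Fintype.card F) := Real.sqrt_pos.2 (Nat.cast_pos.2 Fintype.card_pos)
  have hroots : ‖∑ y with y ^ 2 = -c, χ (2 * y)‖ ≤ 2 :=
    (norm_sum_le _ _).trans (by simpa using card_filter_sq_eq_le_two (-c))
  have key := congrArg norm (gaussSum_mul_salieSum_neg_one hF hχ c)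
  rw [norm_mul, norm_mul, norm_gaussSum_quadraticChar hF hχ, Complex.norm_natCast] at key
  have hS : ‖salieSum η χ c (-1)‖ = √(Fintype.card F) * ‖∑ y with y ^ 2 = -c, χ (2 * y)‖ := by
    refine mul_left_cancel₀ hq.ne' ?_
    rw [key, ← mul_assoc, Real.mul_self_sqrt (Nat.cast_nonneg _)]
  rw [hS, mul_comm 2]
  exact mul_le_mul_of_nonneg_left hroots hq.le

lemma norm_salieSum_le_of_ne_zero (hF : ringChar F ≠ 2) (hχ : χ.IsPrimitive) (a : F) {b : F}
    (hb : b ≠ 0) : ‖salieSum η χ a b‖ ≤ 2 * √(Fintype.card F) := by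
  rw [salieSum_eq_mul_salieSum _ _ a b (neg_ne_zero.2 hb), inv_neg, mul_neg (b := b⁻¹),
    mul_inv_cancel₀ hb, norm_mul, ringHomComp_apply, Int.coe_castRingHom,
    norm_quadraticChar_apply (neg_ne_zero.2 hb), one_mul]
  exact norm_salieSum_neg_one_le hF hχ _

lemma norm_salieSum_le (hF : ringChar F ≠ 2) (hχ : χ.IsPrimitive) (a b : F) :
    ‖salieSum η χ a b‖ ≤ 2 * √(Fintype.card F) := by
  rcases ne_or_eq b 0 with hb | rfl
  · exact norm_salieSum_le_of_ne_zero hF hχ a hb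
  rcases ne_or_eq a 0 with ha | rfl
  · rw [salieSum_comm, ((quadraticChar_isQuadratic F).comp _).inv]
    exact norm_salieSum_le_of_ne_zero hF hχ 0 ha
  have hη : η ≠ 1 := (ringHomComp_ne_one_iff Int.cast_injective).2 (quadraticChar_ne_one hF)
  rw [salieSum_zero_zero hη, norm_zero]
  positivity

end Bound

/-- Salié sum (twisted Kloosterman sum) bound: for `q` odd, a nontrivial additive
character `χ`, the quadratic character `ψ`, and any `a b ∈ F_q`,
`|∑_{t ∈ F_q^*} ψ(t) χ(at + b t⁻¹)| ≤ C q^{1/2}` with an absolute constant `C`. -/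
theorem stmt6 :
    ∃ C : ℝ, 0 < C ∧
      ∀ (F : Type) [Field F] [Fintype F] [DecidableEq F],
        Odd (Fintype.card F) →
        ∀ χ : F → ℂ, χ 0 = 1 → (∀ x y : F, χ (x + y) = χ x * χ y) → (∃ x : F, χ x ≠ 1) →
        ∀ ψ : F → ℂ, (∀ t : F, t ≠ 0 → ψ t = if ∃ s : F, s * s = t then 1 else -1) →
        ∀ a b : F,
          ‖(∑ t ∈ Finset.univ.filter (fun t : F => t ≠ 0),
              ψ t * χ (a * t + b * t⁻¹))‖
            ≤ C * Real.sqrt (Fintype.card F) := by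
  refine ⟨2, two_pos, fun F _ _ _ hq χ hχ0 hχm hnt ψ hψ a b ↦ ?_⟩
  let χ' : AddChar F ℂ := ⟨χ, hχ0, hχm⟩
  have hχ' : χ'.IsPrimitive := IsPrimitive.of_ne_one fun h ↦
    hnt.elim fun x hx ↦ hx (DFunLike.congr_fun h x)
  have hF : ringChar F ≠ 2 := fun h ↦
    Nat.not_even_iff_odd.2 hq (Nat.even_iff.2 (FiniteField.even_card_iff_char_two.1 h))
  convert norm_salieSum_le hF hχ' a b using 2
  rw [salieSum, sum_filter]
  refine sum_congr rfl fun t _ ↦ ?_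
  split_ifs with ht
  · rw [hψ t ht, ringHomComp_apply, Int.coe_castRingHom, quadraticChar_eq_ite ht]
    split_ifs <;> simp [χ']
  · simp [not_not.1 ht]
end

section
/- Let d ≥ 2, let F_q be a finite field of odd characteristic, Q a non-degenerate quadratic form on F_q^d, and j ∈ F_q \ {0}. Then for every x ∈ F_q^d with x ≠ (0,…,0), the number of pairs (α, β) ∈ S_j × S_j with α + β = x is at most 2 q^{d−2}. -/
open Finset

/-! Pairs `α + β = x` on `S_j` correspond to points `α` with `Q α = j` on the affine
hyperplane `2 B(x, α) = Q(x)`, `B` the polar form. If the direction `x^⊥` of that hyperplane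
contains a vector `e` with `Q e ≠ 0`, each line parallel to `e` meets the quadric in at most two
points, and double counting `(α, t) ↦ α - t • e` against the `q^(d-1)` points of the hyperplane
gives the bound. Otherwise `Q` vanishes on `x^⊥`. Were `Q x ≠ 0`, `B` would restrict to a
nondegenerate form on `x^⊥`, of dimension `d - 1 ≥ 1`, and in odd characteristic such a form has
an anisotropic vector. Hence `Q x = 0`, the hyperplane is `x^⊥` itself and misses `S_j`. -/

theorem Finset.card_filter_product_add_eq {G : Type*} [AddCommGroup G] [DecidableEq G]
    (S : Finset G) (x : G) :
    #{p ∈ S ×ˢ S | p.1 + p.2 = x} = #{α ∈ S | x - α ∈ S} := by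
  refine card_nbij' Prod.fst (fun α => (α, x - α)) (fun p hp => ?_) (fun α hα => ?_)
    (fun p hp => ?_) fun α _ => rfl
  · simp only [coe_filter, mem_product, Set.mem_ofPred_eq] at hp ⊢
    rw [← hp.2, add_sub_cancel_left]
    exact hp.1
  · simp only [coe_filter, mem_product, Set.mem_ofPred_eq] at hα ⊢
    exact ⟨hα, add_sub_cancel _ _⟩
  · simp only [coe_filter, mem_product, Set.mem_ofPred_eq] at hp
    rw [← hp.2]
    exact Prod.ext rfl (add_sub_cancel_left _ _)

namespace LinearMap

variable {F V : Type*} [Field F] [Fintype F] [DecidableEq F]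
  [AddCommGroup V] [Module F V] [Fintype V]

theorem card_mul_card_fiber_of_ne_zero {c : V →ₗ[F] F} (hc : c ≠ 0) (r : F) :
    Fintype.card F * #{v | c v = r} = Fintype.card V := by
  have hsurj : Function.Surjective c := surjective_of_ne_zero hc
  have hfiber : ∀ s, #{v | c v = s} = #{v | c v = r} := fun s =>
    AddMonoidHom.card_fiber_eq_of_mem_range c (hsurj s) (hsurj r)
  calc Fintype.card F * #{v | c v = r} = ∑ s : F, #{v | c v = s} := by simp [hfiber]
    _ = Fintype.card V :=
      (card_eq_sum_card_fiberwise (s := univ) (t := univ) fun _ _ => mem_univ _).symm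

end LinearMap

namespace LinearMap.BilinForm

variable {F V : Type*} [Field F] [AddCommGroup V] [Module F V]

theorem exists_apply_eq_zero_and_self_ne_zero [FiniteDimensional F V] [Invertible (2 : F)]
    {B : LinearMap.BilinForm F V} (hB : B.IsSymm) (hnd : B.Nondegenerate)
    (hV : 2 ≤ Module.finrank F V) {x : V} (hx : B x x ≠ 0) : ∃ e, B x e = 0 ∧ B e e ≠ 0 := by
  set W := B.orthogonal (F ∙ x)
  have hW : (B.restrict W).Nondegenerate :=
    restrict_nondegenerate_orthogonal_spanSingleton B hnd hB.isRefl hx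
  have hx0 : x ≠ 0 := by rintro rfl; simp at hx
  have : Nontrivial W := by
    rw [← Module.finrank_pos_iff (R := F), finrank_orthogonal hnd,
      finrank_span_singleton hx0]
    omega
  have hne : B.restrict W ≠ 0 := by
    obtain ⟨w, hw⟩ := exists_ne (0 : W)
    intro h
    exact hw (hW.1 w fun y => by simp [h])
  obtain ⟨e, he⟩ := exists_bilinForm_self_ne_zero hne (isSymm_iff.1 (hB.restrict W))
  exact ⟨e, mem_orthogonal_iff.1 e.2 x (Submodule.mem_span_singleton_self x), he⟩

variable [Fintype F] [DecidableEq F]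

open Polynomial in
theorem card_filter_apply_add_smul_self_le_two (B : LinearMap.BilinForm F V) {e : V}
    (he : B e e ≠ 0) (h : V) (j : F) : #{t : F | B (h + t • e) (h + t • e) = j} ≤ 2 := by
  let p : F[X] := C (B e e) * X ^ 2 + C (B h e + B e h) * X + C (B h h - j)
  have hdeg : p.natDegree = 2 := natDegree_quadratic he
  have hp : p ≠ 0 := by rintro hp; simp [hp] at hdeg
  calc #{t : F | B (h + t • e) (h + t • e) = j}
      ≤ #p.roots.toFinset := by
        refine card_le_card fun t ht => ?_
        rw [mem_filter] at ht
        rw [Multiset.mem_toFinset, mem_roots hp, IsRoot, ← sub_eq_zero.2 ht.2]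
        simp only [p, eval_add, eval_mul, eval_pow, eval_C, eval_X, map_add, map_smul,
          LinearMap.add_apply, LinearMap.smul_apply, smul_eq_mul]
        ring
    _ ≤ 2 := (Multiset.toFinset_card_le _).trans (hdeg ▸ card_roots' p)

theorem card_filter_self_eq_and_mul_card_le [Fintype V] [DecidableEq V]
    (B : LinearMap.BilinForm F V) {c : V →ₗ[F] F} {e : V} (hce : c e = 0) (he : B e e ≠ 0)
    (j r : F) : #{α | B α α = j ∧ c α = r} * Fintype.card F ≤ 2 * #{v | c v = r} := by
  set S : Finset V := {α | B α α = j ∧ c α = r}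
  let f : V × F → V := fun p => p.1 - p.2 • e
  have hmaps : ∀ p ∈ S ×ˢ univ, f p ∈ ({v | c v = r} : Finset V) := by
    intro p hp
    simp only [S, mem_product, mem_filter, mem_univ, true_and] at hp ⊢
    simp [f, hce, hp.1.2]
  have hfiber : ∀ h ∈ ({v | c v = r} : Finset V), #{p ∈ S ×ˢ univ | f p = h} ≤ 2 := by
    intro h _
    refine (card_le_card_of_injOn Prod.snd (fun p hp => ?_) fun p hp p' hp' hpp' => ?_).trans
      (card_filter_apply_add_smul_self_le_two B he h j)
    · simp only [S, coe_filter, mem_product, mem_filter, mem_univ, true_and,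
        Set.mem_ofPred_eq, f] at hp ⊢
      rw [← hp.2, sub_add_cancel]
      exact hp.1.1.1
    · simp only [S, coe_filter, mem_product, mem_filter, mem_univ, true_and,
        Set.mem_ofPred_eq, f] at hp hp'
      ext
      · rw [← sub_add_cancel p.1 (p.2 • e), ← sub_add_cancel p'.1 (p'.2 • e), hp.2, hp'.2, hpp']
      · exact hpp'
  calc #S * Fintype.card F = #(S ×ˢ univ) := (card_product _ _).symm
    _ ≤ 2 * #{v | c v = r} := card_le_mul_card_image_of_maps_to hmaps 2 hfiber

theorem card_filter_self_eq_and_sub_self_eq_le [Fintype V] [DecidableEq V]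
    {B : LinearMap.BilinForm F V} (hB : B.IsSymm) (hnd : B.Nondegenerate) (h2 : (2 : F) ≠ 0)
    (hV : 2 ≤ Module.finrank F V) {x : V} (hx : x ≠ 0) {j : F} (hj : j ≠ 0) :
    #{α | B α α = j ∧ B (x - α) (x - α) = j} ≤
      2 * Fintype.card F ^ (Module.finrank F V - 2) := by
  have : Invertible (2 : F) := invertibleOfNonzero h2
  set c : V →ₗ[F] F := (2 : F) • B x
  have hsub : ∀ α, B (x - α) (x - α) = B x x - c α + B α α := fun α => by
    simp only [c, map_sub, LinearMap.sub_apply, LinearMap.smul_apply, smul_eq_mul, hB.eq α x]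
    ring
  have hS : ({α | B α α = j ∧ B (x - α) (x - α) = j} : Finset V) =
      ({α | B α α = j ∧ c α = B x x} : Finset V) := by
    refine filter_congr fun α _ => and_congr_right fun hα => ?_
    rw [hsub, hα, add_eq_right, sub_eq_zero, eq_comm]
  rw [hS]
  by_cases hiso : ∃ e, B x e = 0 ∧ B e e ≠ 0
  · obtain ⟨e, hxe, he⟩ := hiso
    have hc : c ≠ 0 := fun hc => hx <| hnd.1 x fun y => by
      simpa [c, h2] using LinearMap.congr_fun hc y
    obtain ⟨n, hn⟩ : ∃ n, Module.finrank F V = n + 2 := ⟨_, (Nat.sub_add_cancel hV).symm⟩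
    have hcount :=
      card_filter_self_eq_and_mul_card_le B (c := c) (by simp [c, hxe]) he j (B x x)
    have hH := LinearMap.card_mul_card_fiber_of_ne_zero hc (B x x)
    rw [Module.card_eq_pow_finrank (K := F) (V := V), hn, pow_succ', mul_left_cancel_iff_of_pos
      Fintype.card_pos] at hH
    rw [hn, Nat.add_sub_cancel]
    refine Nat.le_of_mul_le_mul_right ?_ (Fintype.card_pos (α := F))
    rwa [mul_assoc, ← pow_succ, ← hH]
  · simp only [not_exists, not_and, not_not] at hiso
    have hxx : B x x = 0 := by
      by_contra hxx
      obtain ⟨e, hxe, he⟩ := exists_apply_eq_zero_and_self_ne_zero hB hnd hV hxx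
      exact he (hiso e hxe)
    have hempty : ({α | B α α = j ∧ c α = B x x} : Finset V) = ∅ :=
      filter_eq_empty_iff.2 fun α _ ⟨hα, hcα⟩ =>
        hj (hα ▸ hiso α (by simpa [c, hxx, h2] using hcα))
    simp [hempty]

end LinearMap.BilinForm

theorem Surf_eq_filter_toBilin' {F : Type} [Field F] [Fintype F] [DecidableEq F] {d : ℕ}
    (a : Matrix (Fin d) (Fin d) F) (j : F) :
    Surf a j = ({y | a.toBilin' y y = j} : Finset (Fin d → F)) := by
  simp only [Surf, Matrix.toBilin'_apply, mul_comm (a _ _)]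

/-- For every `x ≠ 0`, the number of pairs `(α,β) ∈ S_j × S_j` with `α + β = x`
is at most `2 q^{d-2}`. -/
theorem stmt15 (d : ℕ) (hd : 2 ≤ d)
    (F : Type) [Field F] [Fintype F] [DecidableEq F]
    (hchar : Odd (ringChar F))
    (a : Matrix (Fin d) (Fin d) F) (hsym : ∀ i k, a i k = a k i) (hdet : a.det ≠ 0)
    (j : F) (hj : j ≠ 0)
    (x : Fin d → F) (hx : x ≠ 0) :
    (((Surf a j) ×ˢ (Surf a j)).filter (fun pr => pr.1 + pr.2 = x)).card
      ≤ 2 * Fintype.card F ^ (d - 2) := by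
  have h2 : (2 : F) ≠ 0 := Ring.two_ne_zero fun h => Nat.not_odd_iff_even.2 even_two (h ▸ hchar)
  have hB : a.toBilin'.IsSymm :=
    Matrix.isSymm_toBilin'_iff_isSymm.2 (Matrix.IsSymm.ext fun i k => hsym k i)
  have hnd : a.toBilin'.Nondegenerate :=
    LinearMap.BilinForm.nondegenerate_toBilin'_iff_det_ne_zero.2 hdet
  have hdim : Module.finrank F (Fin d → F) = d := Module.finrank_fin_fun F
  rw [card_filter_product_add_eq, Surf_eq_filter_toBilin', filter_filter]
  simpa only [mem_filter, mem_univ, true_and, hdim] using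
    LinearMap.BilinForm.card_filter_self_eq_and_sub_self_eq_le hB hnd h2 (hdim.symm ▸ hd) hx hj
end
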